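/- arXiv:2202.06249 — 4 statements merged into one kernel-verified Lean document; each statement's English description precedes it below -/
import Mathlib

section
/- Let k ≥ 3 and ℓ ≥ 2 both be odd, and set t = (k+ℓ-2)/2. In the graph H(n,p,t+1) = K_t ∨ T_p(n-t), any subgraph isomorphic to the edge blow-up C_{k,ℓ}^{p+1} would require k+ℓ cliques of order p+1 each containing a vertex of the K_t part, but at most 2(t-1)+3 = k+ℓ-1 such cliques can be found (since in C_{k,ℓ}^{p+1} only three of the (p+1)-cliques share a common vertex and all other pairs share at most one vertex). Hence H(n,p,t+1) is C_{k,ℓ}^{p+1}-free. -/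
open SimpleGraph

/-- The lollipop `C_{k,ℓ}`: a cycle on vertices `0,…,k-1` together with a pendant
path `0, k, k+1, …, k+ℓ-1` appended to the cycle vertex `0` (the *center*). -/
def lollipop (k l : ℕ) : SimpleGraph (Fin (k + l)) :=
  SimpleGraph.fromRel (fun a b =>
    (b.val = a.val + 1 ∧ b.val < k) ∨ (a.val = 0 ∧ b.val = k - 1) ∨
    (a.val = 0 ∧ b.val = k) ∨ (b.val = a.val + 1 ∧ k ≤ a.val))

/-- The edge blow-up `H^{p+1}` of a graph `H`: each edge of `H` is replaced by a
clique of order `p+1`, the `p-1` new vertices of the cliques being all distinct. -/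
def edgeBlowup {V : Type*} (H : SimpleGraph V) (p : ℕ) :
    SimpleGraph (V ⊕ (H.edgeSet × Fin (p - 1))) where
  Adj x y := match x, y with
    | .inl a, .inl b => H.Adj a b
    | .inl a, .inr e => a ∈ (e.1 : Sym2 V)
    | .inr e, .inl a => a ∈ (e.1 : Sym2 V)
    | .inr e, .inr f => e.1 = f.1 ∧ e.2 ≠ f.2
  symm := ⟨by rintro (a | e) (b | f) h <;> simp_all <;> tauto⟩
  loopless := ⟨by rintro (a | e) h <;> simp_all⟩

/-- `A` is contained in `B` as a subgraph (there is an injective graph homomorphism). -/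
def IsCont {α β : Type*} (A : SimpleGraph α) (B : SimpleGraph β) : Prop :=
  ∃ f : α → β, Function.Injective f ∧ ∀ ⦃a b⦄, A.Adj a b → B.Adj (f a) (f b)

/-- The join `G ∨ H` of two graphs: all edges between the two graphs are added. -/
def gJoin {α β : Type*} (G : SimpleGraph α) (H : SimpleGraph β) : SimpleGraph (α ⊕ β) where
  Adj x y := match x, y with
    | .inl a, .inl b => G.Adj a b
    | .inr a, .inr b => H.Adj a b
    | .inl _, .inr _ => True
    | .inr _, .inl _ => True
  symm := ⟨by rintro (a | a) (b | b) h <;> first | exact h.symm | trivial⟩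
  loopless := ⟨by rintro (a | a) h <;> first | exact G.loopless.irrefl _ h | exact H.loopless.irrefl _ h⟩

/-- The disjoint union of two graphs. -/
def dUnion {α β : Type*} (G : SimpleGraph α) (H : SimpleGraph β) : SimpleGraph (α ⊕ β) where
  Adj x y := match x, y with
    | .inl a, .inl b => G.Adj a b
    | .inr a, .inr b => H.Adj a b
    | _, _ => False
  symm := ⟨by rintro (a | a) (b | b) h <;> first | exact h.symm | exact h⟩
  loopless := ⟨by rintro (a | a) h <;> first | exact G.loopless.irrefl _ h | exact H.loopless.irrefl _ h⟩

/-- `a` vertex-disjoint copies of the graph `G`. -/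
def copies {β : Type*} (a : ℕ) (G : SimpleGraph β) : SimpleGraph (Fin a × β) where
  Adj x y := x.1 = y.1 ∧ G.Adj x.2 y.2
  symm := ⟨by rintro x y ⟨h1, h2⟩; exact ⟨h1.symm, h2.symm⟩⟩
  loopless := ⟨by rintro x ⟨h1, h2⟩; exact G.loopless.irrefl _ h2⟩

/-- The complete multipartite graph `K_{p}(m,…,m)` with `p` parts of size `m`. -/
def completeMultipartite (p m : ℕ) : SimpleGraph (Fin p × Fin m) where
  Adj x y := x.1 ≠ y.1
  symm := ⟨fun _ _ h => h.symm⟩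

/-- `H(n,p,q) = K_{q-1} ∨ T_p(n-q+1)`. -/
def Hgraph (n p q : ℕ) : SimpleGraph (Fin (q - 1) ⊕ Fin (n - (q - 1))) :=
  gJoin (completeGraph (Fin (q - 1))) (turanGraph (n - (q - 1)) p)

/-- The number of edges of a graph. -/
noncomputable def numEdges {α : Type*} (G : SimpleGraph α) : ℕ := Nat.card G.edgeSet

/-- `E` (a graph on `n` vertices) is the unique extremal `H`-free graph on `n`
vertices: it is `H`-free, every `H`-free graph on `n` vertices has at most as many
edges, and any `H`-free graph attaining this maximum is isomorphic to `E`. -/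
def UniqueExtremal {W α : Type*} (H : SimpleGraph W) (n : ℕ) (E : SimpleGraph α) : Prop :=
  ¬ IsCont H E ∧ Nat.card α = n ∧
    ∀ G : SimpleGraph (Fin n), ¬ IsCont H G →
      numEdges G ≤ numEdges E ∧ (numEdges G = numEdges E → Nonempty (G ≃g E))

/-- The member of the family `𝒴_{k+1,ℓ+1}` obtained from the path `P_{k+1}`
(on `Fin (k+1)`) by appending a path `P_{ℓ+1}` to its vertex `j` (the branching
vertex), the appended path having the `ℓ` extra vertices `Fin l`. -/
def Ygraph (k l j : ℕ) : SimpleGraph (Fin (k + 1) ⊕ Fin l) :=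
  SimpleGraph.fromRel (fun x y => match x, y with
    | .inl a, .inl b => b.val = a.val + 1
    | .inl a, .inr b => a.val = j ∧ b.val = 0
    | .inr a, .inr b => b.val = a.val + 1
    | _, _ => False)

/-- The graph obtained from `H` by splitting every vertex of `U`: each `v ∈ U`
is replaced by `deg v` new vertices, one for each neighbor `w` of `v`, joined to
`w` only. -/
def splitGraph {V : Type*} (H : SimpleGraph V) (U : Set V) :
    SimpleGraph ({v : V // v ∉ U} ⊕ {p : V × V // p.1 ∈ U ∧ H.Adj p.1 p.2}) where
  Adj x y := match x, y with
    | .inl a, .inl b => H.Adj a.1 b.1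
    | .inl a, .inr e => e.1.2 = a.1
    | .inr e, .inl a => e.1.2 = a.1
    | .inr _, .inr _ => False
  symm := ⟨by rintro (a | e) (b | f) h <;> first | exact h.symm | exact h⟩
  loopless := ⟨by rintro (a | e) h <;> simp_all⟩


/-! Each edge `e` of `C_{k,ℓ}` becomes a `K_{p+1}` in the blow-up, which cannot lie inside the
`K_{p+1}`-free Turán part, so one of its vertices is sent to a vertex `w e` of the `K_t` part. Two
edges with the same `w` share that preimage, which then has to be a common original vertex; so the
edges with a given `w` form a star, with at most three edges at the centre of the lollipop and at
most two elsewhere. Hence `k + ℓ ≤ 2t + 1 < k + ℓ`. -/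

open Finset

section EdgeBlowup

variable {V : Type*} {H : SimpleGraph V} {p : ℕ}

def blowupClique (H : SimpleGraph V) (p : ℕ) (e : Sym2 V) :
    Set (V ⊕ (H.edgeSet × Fin (p - 1))) :=
  {x | Sum.elim (· ∈ e) (fun y => y.1.1 = e) x}

lemma exists_eq_inl_of_mem_blowupClique {e e' : Sym2 V} {x : V ⊕ (H.edgeSet × Fin (p - 1))}
    (hx : x ∈ blowupClique H p e) (hx' : x ∈ blowupClique H p e') (he : e ≠ e') :
    ∃ v, x = .inl v := by
  rcases x with v | y
  · exact ⟨v, rfl⟩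
  · exact absurd ((hx : y.1.1 = e).symm.trans hx') he

def blowupCliqueCopy {a b : V} (hab : H.Adj a b) :
    Copy (completeGraph (Fin (p + 1))) (edgeBlowup H p) where
  toHom :=
    { toFun := fun j =>
        if h₀ : j.val = 0 then .inl a
        else if h₁ : j.val = 1 then .inl b
        else .inr (⟨s(a, b), hab⟩, ⟨j.val - 2, by have := j.isLt; omega⟩)
      map_rel' := fun {i j} hij => by
        have hv : i.val ≠ j.val := Fin.val_ne_of_ne hij
        split_ifs <;>
          first
          | omega
          | exact hab
          | exact hab.symm
          | exact Sym2.mem_mk_left a b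
          | exact Sym2.mem_mk_right a b
          | exact ⟨rfl, fun hc => by simp only [Fin.ext_iff] at hc; omega⟩ }
  injective' := fun i j h => by
    simp only [RelHom.coeFn_mk] at h
    rw [Fin.ext_iff]
    split_ifs at h <;>
      simp only [Sum.inl.injEq, Sum.inr.injEq, Prod.mk.injEq, Fin.mk.injEq, true_and] at h <;>
      first | omega | exact absurd h hab.ne | exact absurd h.symm hab.ne

lemma blowupCliqueCopy_mem {a b : V} (hab : H.Adj a b) (j : Fin (p + 1)) :
    blowupCliqueCopy hab j ∈ blowupClique H p s(a, b) := by
  change (if h₀ : j.val = 0 then _ else if h₁ : j.val = 1 then _ else _) ∈ _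
  split_ifs
  · exact Sym2.mem_mk_left a b
  · exact Sym2.mem_mk_right a b
  · rfl

end EdgeBlowup

lemma gJoin_exists_eq_inl_of_cliqueFree {α β : Type*} {F : SimpleGraph α} {G : SimpleGraph β}
    {n : ℕ} (hG : G.CliqueFree n) (φ : Copy (completeGraph (Fin n)) (gJoin F G)) :
    ∃ j a, φ j = .inl a := by
  by_contra! hφ
  have hinr : ∀ j, ∃ b, φ j = .inr b := fun j => by
    rcases h : φ j with a | b
    · exact absurd h (hφ j a)
    · exact ⟨b, rfl⟩
  choose u hu using hinr
  refine (cliqueFree_iff.mp hG).false ⟨⟨u, fun hij => ?_⟩, fun i j h => φ.injective ?_⟩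
  · have h := φ.toHom.map_adj hij
    rwa [Copy.toHom_apply, Copy.toHom_apply, hu, hu] at h
  · simp only [Copy.toHom_apply, hu]
    exact congrArg _ h

section Counting

variable {V α β : Type*} {H : SimpleGraph V} {p : ℕ} {F : SimpleGraph α} {G : SimpleGraph β}

lemma exists_blowupClique_mem_eq_inl (hG : G.CliqueFree (p + 1))
    (f : Copy (edgeBlowup H p) (gJoin F G)) (e : H.edgeSet) :
    ∃ x ∈ blowupClique H p e, ∃ a, f x = .inl a := by
  obtain ⟨e, he⟩ := e
  induction e using Sym2.ind with
  | _ a b =>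
    obtain ⟨j, c, hj⟩ := gJoin_exists_eq_inl_of_cliqueFree hG (f.comp (blowupCliqueCopy he))
    exact ⟨_, blowupCliqueCopy_mem he j, c, hj⟩

/-- Edges sent to the same vertex `a` of `F` share their preimage of `a`, which is then a common
original vertex: so they form a star. -/
lemma card_fiber_le_one_or_le_degree [Fintype V] [DecidableRel H.Adj] [DecidableEq α]
    (f : Copy (edgeBlowup H p) (gJoin F G)) {x : H.edgeSet → V ⊕ (H.edgeSet × Fin (p - 1))}
    {w : H.edgeSet → α} (hx : ∀ e : H.edgeSet, x e ∈ blowupClique H p e)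
    (hw : ∀ e, f (x e) = .inl (w e)) (a : α) :
    #{e | w e = a} ≤ 1 ∨ ∃ v, f (.inl v) = .inl a ∧ #{e | w e = a} ≤ H.degree v := by
  classical
  refine or_iff_not_imp_left.mpr fun hS => ?_
  obtain ⟨e, he, e', he', hne⟩ := one_lt_card.mp (not_le.mp hS)
  simp only [mem_filter, mem_univ, true_and] at he he'
  have hx_eq : ∀ e'', w e'' = a → x e'' = x e := fun e'' h =>
    f.injective (by rw [Copy.toHom_apply, Copy.toHom_apply, hw, hw, h, he])
  obtain ⟨v, hv⟩ := exists_eq_inl_of_mem_blowupClique (hx e)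
    (hx_eq e' he' ▸ hx e') (fun h => hne (Subtype.ext h))
  refine ⟨v, by rw [← hv, hw, he], ?_⟩
  rw [← card_incidenceFinset_eq_degree]
  refine card_le_card_of_injOn Subtype.val (fun e'' h => ?_) Subtype.val_injective.injOn
  simp only [coe_filter, mem_univ, true_and, Set.mem_ofPred_eq] at h
  have hmem := hx e''
  rw [hx_eq e'' h, hv] at hmem
  exact (mem_incidenceFinset _ _ _).mpr ⟨e''.2, hmem⟩

theorem card_edgeFinset_le_of_isCont_edgeBlowup_gJoin [Fintype V] [DecidableRel H.Adj]
    [Fintype α] (hG : G.CliqueFree (p + 1)) (v₀ : V) (hdeg : ∀ v ≠ v₀, H.degree v ≤ 2)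
    (hdeg₀ : H.degree v₀ ≤ 3) (hc : IsCont (edgeBlowup H p) (gJoin F G)) :
    #H.edgeFinset ≤ 2 * Fintype.card α + 1 := by
  classical
  obtain ⟨f, hf, hadj⟩ := hc
  let φ : Copy (edgeBlowup H p) (gJoin F G) := ⟨⟨f, fun h => hadj h⟩, hf⟩
  choose x hx w hw using exists_blowupClique_mem_eq_inl hG φ
  have hfiber (a : α) : #{e | w e = a} ≤ 2 + if φ (.inl v₀) = .inl a then 1 else 0 := by
    rcases card_fiber_le_one_or_le_degree φ hx hw a with h | ⟨v, hv, h⟩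
    · omega
    · by_cases hv₀ : v = v₀
      · subst hv₀; simp only [hv, if_true]; omega
      · have := hdeg v hv₀; split_ifs <;> omega
  calc #H.edgeFinset = ∑ a, #{e | w e = a} := by
        rw [edgeFinset_card, ← card_univ]
        exact card_eq_sum_card_fiberwise fun _ _ => mem_univ _
    _ ≤ ∑ a, (2 + if φ (.inl v₀) = .inl a then 1 else 0) := sum_le_sum fun a _ => hfiber a
    _ = 2 * Fintype.card α + #{a | φ (.inl v₀) = .inl a} := by
        rw [sum_add_distrib, sum_boole]; simp [mul_comm]
    _ ≤ 2 * Fintype.card α + 1 := by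
        gcongr
        exact card_le_one.mpr fun a ha b hb => by simp_all

end Counting

section Lollipop

variable {k l : ℕ}

/-- Each cycle vertex is matched with its successor on the cycle and each path vertex with its
predecessor on the path, so that distinct vertices yield distinct edges. -/
def lollipopMate (k l : ℕ) (i : Fin (k + l)) : Fin (k + l) :=
  ⟨if i.val + 1 = k then 0
    else if i.val < k then i.val + 1
    else if i.val = k then 0
    else i.val - 1, by have := i.isLt; split_ifs <;> omega⟩

lemma lollipop_adj_lollipopMate (hk : 3 ≤ k) (i : Fin (k + l)) :
    (lollipop k l).Adj i (lollipopMate k l i) := by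
  have := i.isLt
  simp only [lollipop, lollipopMate, fromRel_adj, ne_eq, Fin.ext_iff]
  split_ifs <;> omega

lemma le_card_edgeFinset_lollipop [DecidableRel (lollipop k l).Adj] (hk : 3 ≤ k) :
    k + l ≤ #(lollipop k l).edgeFinset := by
  have hinj : Set.InjOn (fun i => s(i, lollipopMate k l i)) (univ : Finset (Fin (k + l))) := by
    intro i _ j _ h
    have := i.isLt; have := j.isLt
    simp only [Sym2.eq_iff, lollipopMate, Fin.ext_iff] at h ⊢
    split_ifs at h <;> omega
  simpa using card_le_card_of_injOn _
    (fun i _ => mem_edgeFinset.mpr (lollipop_adj_lollipopMate hk i)) hinj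

lemma degree_lollipop_le_two [DecidableRel (lollipop k l).Adj] {v : Fin (k + l)}
    (hv : v.val ≠ 0) : (lollipop k l).degree v ≤ 2 := by
  rw [← card_neighborFinset_eq_degree]
  refine (card_le_card_of_injOn Fin.val (t := {if v.val = k then 0 else v.val - 1,
    if v.val + 1 = k then 0 else v.val + 1}) (fun u hu => ?_) Fin.val_injective.injOn).trans
    card_le_two
  rw [mem_coe, mem_neighborFinset] at hu
  simp only [lollipop, fromRel_adj, ne_eq, Fin.ext_iff] at hu
  simp only [coe_insert, coe_singleton, Set.mem_insert_iff, Set.mem_singleton_iff]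
  have := u.isLt
  split_ifs <;> omega

lemma degree_lollipop_zero_le_three [DecidableRel (lollipop k l).Adj] (h : 0 < k + l) :
    (lollipop k l).degree ⟨0, h⟩ ≤ 3 := by
  rw [← card_neighborFinset_eq_degree]
  refine (card_le_card_of_injOn Fin.val (t := {1, k - 1, k}) (fun u hu => ?_)
    Fin.val_injective.injOn).trans card_le_three
  rw [mem_coe, mem_neighborFinset] at hu
  simp only [lollipop, fromRel_adj, ne_eq, Fin.ext_iff] at hu
  simp only [coe_insert, coe_singleton, Set.mem_insert_iff, Set.mem_singleton_iff]
  omega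

end Lollipop

theorem stmt3_general (k l p t : ℕ) (hk : 3 ≤ k) (hp : 2 ≤ p) (ht : t = (k + l - 2) / 2) :
    ∃ N : ℕ, ∀ n ≥ N,
      ¬ IsCont (edgeBlowup (lollipop k l) p) (Hgraph n p (t + 1)) := by
  classical
  refine ⟨0, fun n _ hc => ?_⟩
  have hcount := card_edgeFinset_le_of_isCont_edgeBlowup_gJoin (turanGraph_cliqueFree (by omega))
    ⟨0, by omega⟩ (fun v hv => degree_lollipop_le_two fun h => hv (Fin.ext h))
    (degree_lollipop_zero_le_three _) hc
  have := le_card_edgeFinset_lollipop (l := l) hk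
  rw [Fintype.card_fin] at hcount
  omega

/-- For `k ≥ 3` odd, `ℓ ≥ 2` odd, `p ≥ 2`, `t = (k+ℓ-2)/2` and `n`
sufficiently large, the graph `H(n,p,t+1) = K_t ∨ T_p(n-t)` is `C_{k,ℓ}^{p+1}`-free. -/
theorem stmt3 (k l p t : ℕ) (hk : 3 ≤ k) (hko : Odd k) (hl : 2 ≤ l) (hlo : Odd l)
    (hp : 2 ≤ p) (ht : t = (k + l - 2) / 2) :
    ∃ N : ℕ, ∀ n ≥ N,
      ¬ IsCont (edgeBlowup (lollipop k l) p) (Hgraph n p (t + 1)) :=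
  stmt3_general k l p t hk hp ht
end

section
/- Let k ≥ 3 be odd and ℓ ≥ 2 be even, and set t = (k+ℓ-3)/2. Then H(n,p,t+2) = K_{t+1} ∨ T_p(n-t-1) contains no copy of C_{k,ℓ}^{p+1}, because a copy would force the K_{t+1} part to be a vertex cover of C_{k,ℓ}, whereas the minimum vertex cover of C_{k,ℓ} has size (k+ℓ+1)/2 > t+1. -/
open SimpleGraph

/-! A copy of `C_{k,ℓ}^{p+1}` in `K_{t+1} ∨ T_p(n-t-1)` sends at least one vertex of each blow-up
clique `K_{p+1}` into `K_{t+1}`, since `T_p` is `K_{p+1}`-free. Projecting these vertices back to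
`C_{k,ℓ}` yields a vertex cover with at most `t + 1` vertices. On the other hand, `C_{k,ℓ}` carries
a family of `k + ℓ` edges meeting every vertex at most twice, so a vertex cover has at least
`(k + ℓ) / 2` vertices, hence at least `(k + ℓ + 1) / 2 > t + 1` as `k + ℓ` is odd. -/

namespace SimpleGraph

open Finset

variable {V ι α β : Type*}

theorem IsVertexCover.card_le_mul_card [DecidableEq V] {G : SimpleGraph V} {S : Finset V}
    (hS : G.IsVertexCover S) {s : Finset ι} (u w : ι → V) (huw : ∀ i ∈ s, G.Adj (u i) (w i))
    {d : ℕ} (hd : ∀ v, #{i ∈ s | u i = v ∨ w i = v} ≤ d) :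
    #s ≤ d * #S := by
  let endpointIn : ι → V := fun i => if u i ∈ S then u i else w i
  have hmaps : ∀ i ∈ s, endpointIn i ∈ S := fun i hi => by
    by_cases hu : u i ∈ S
    · simp only [endpointIn, if_pos hu, hu]
    · simpa only [endpointIn, if_neg hu, mem_coe] using (hS (huw i hi)).resolve_left hu
  refine card_le_mul_card_image_of_maps_to hmaps d fun v _ => le_trans ?_ (hd v)
  refine card_le_card fun i hi => ?_
  simp only [mem_filter, endpointIn] at hi ⊢
  obtain ⟨hi, hv⟩ := hi
  split_ifs at hv <;> simp [hi, hv]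

/- The cycle edges `{i, i + 1 mod k}` and every other edge of the pendant path, the latter
counted twice, form a family in which each vertex lies in at most two members. -/
theorem lollipop_add_le_two_mul_card_of_isVertexCover {k l : ℕ} (hk : 2 ≤ k) (hl : Even l)
    {S : Finset (Fin (k + l))} (hS : (lollipop k l).IsVertexCover S) :
    k + l ≤ 2 * #S := by
  obtain ⟨m, rfl⟩ := hl
  let u : Fin (k + (m + m)) → Fin (k + (m + m)) := fun i =>
    ⟨if i < k then i else i - (i - k) % 2, by split_ifs <;> omega⟩
  let w : Fin (k + (m + m)) → Fin (k + (m + m)) := fun i =>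
    ⟨if i + 1 = k then 0 else if i < k then i + 1 else i - (i - k) % 2 + 1,
      by split_ifs <;> omega⟩
  have hadj : ∀ i ∈ univ, (lollipop k (m + m)).Adj (u i) (w i) := fun i _ => by
    simp only [lollipop, fromRel_adj, ne_eq, Fin.ext_iff, u, w]
    split_ifs <;> omega
  have hmult : ∀ v, #{i ∈ univ | u i = v ∨ w i = v} ≤ 2 := fun v => by
    let x := if v < k then (v : ℕ) else v - (v - k) % 2
    let y := if v < k then (if (v : ℕ) = 0 then k - 1 else v - 1) else v - (v - k) % 2 + 1
    refine (card_le_card_of_injOn Fin.val (t := {x, y}) ?_ Fin.val_injective.injOn).trans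
      card_le_two
    intro i hi
    simp only [coe_filter, mem_univ, true_and, Set.mem_ofPred_eq, Fin.ext_iff, u, w] at hi
    simp only [coe_insert, coe_singleton, Set.mem_insert_iff, Set.mem_singleton_iff, x, y]
    split_ifs at hi ⊢ <;> omega
  simpa using IsVertexCover.card_le_mul_card hS u w hadj hmult

theorem exists_isLeft_of_top_hom_gJoin [Fintype ι] {G : SimpleGraph α} {T : SimpleGraph β}
    (hT : T.CliqueFree (Fintype.card ι)) (f : (⊤ : SimpleGraph ι) →g gJoin G T) :
    ∃ i, (f i).isLeft := by
  by_contra! hright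
  have : ∀ i, ∃ b, f i = .inr b := fun i => by
    cases h : f i with
    | inl a => simpa [h] using hright i
    | inr b => exact ⟨b, rfl⟩
  choose g hg using this
  let g' : (⊤ : SimpleGraph ι) →g T := ⟨g, fun {i j} hij => by
    have := f.map_adj hij
    rwa [hg, hg] at this⟩
  exact cliqueFree_iff_top_free.1 hT ⟨g'.toCopy (Hom.injective_of_top_hom g')⟩

def edgeBlowupClique (p : ℕ) {H : SimpleGraph V} {a b : V} (hab : H.Adj a b) :
    (⊤ : SimpleGraph (Fin 2 ⊕ Fin (p - 1))) →g edgeBlowup H p where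
  toFun := Sum.elim (fun j => .inl (![a, b] j)) (fun i => .inr (⟨s(a, b), hab⟩, i))
  map_rel' := by
    rintro (x | i) (y | j) hxy
    · fin_cases x <;> fin_cases y
      exacts [absurd rfl hxy, hab, hab.symm, absurd rfl hxy]
    · fin_cases x
      exacts [Sym2.mem_mk_left a b, Sym2.mem_mk_right a b]
    · fin_cases y
      exacts [Sym2.mem_mk_left a b, Sym2.mem_mk_right a b]
    · exact ⟨rfl, fun hij => hxy (congrArg Sum.inr hij)⟩

noncomputable def edgeBlowupProj (H : SimpleGraph V) (p : ℕ) :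
    V ⊕ (H.edgeSet × Fin (p - 1)) → V :=
  Sum.elim id fun e => (e.1 : Sym2 V).out.1

theorem edgeBlowupProj_edgeBlowupClique_mem (p : ℕ) {H : SimpleGraph V} {a b : V}
    (hab : H.Adj a b) (x : Fin 2 ⊕ Fin (p - 1)) :
    edgeBlowupProj H p (edgeBlowupClique p hab x) ∈ s(a, b) := by
  rcases x with x | i
  · fin_cases x <;> simp [edgeBlowupClique, edgeBlowupProj]
  · exact Sym2.out_fst_mem _

theorem exists_isVertexCover_card_le_of_isCont_edgeBlowup_gJoin [Fintype V] [Fintype α]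
    {H : SimpleGraph V} {G : SimpleGraph α} {T : SimpleGraph β} {p : ℕ} (hp : 1 ≤ p)
    (hT : T.CliqueFree (p + 1)) (h : IsCont (edgeBlowup H p) (gJoin G T)) :
    ∃ C : Finset V, H.IsVertexCover C ∧ #C ≤ Fintype.card α := by
  classical
  obtain ⟨f, hf_inj, hf_adj⟩ := h
  let L : Finset (V ⊕ (H.edgeSet × Fin (p - 1))) := {y | (f y).isLeft}
  refine ⟨L.image (edgeBlowupProj H p), fun a b hab => ?_, ?_⟩
  · have hT' : T.CliqueFree (Fintype.card (Fin 2 ⊕ Fin (p - 1))) := by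
      rwa [Fintype.card_sum, Fintype.card_fin, Fintype.card_fin,
        show 2 + (p - 1) = p + 1 by omega]
    obtain ⟨x, hx⟩ := exists_isLeft_of_top_hom_gJoin hT'
      ((⟨f, fun hxy => hf_adj hxy⟩ : edgeBlowup H p →g gJoin G T).comp (edgeBlowupClique p hab))
    have hmem : edgeBlowupProj H p (edgeBlowupClique p hab x) ∈ L.image (edgeBlowupProj H p) :=
      mem_image_of_mem _ (by simpa [L] using hx)
    rcases Sym2.mem_iff.1 (edgeBlowupProj_edgeBlowupClique_mem p hab x) with h | h
    · exact Or.inl (mem_coe.2 (h ▸ hmem))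
    · exact Or.inr (mem_coe.2 (h ▸ hmem))
  · calc #(L.image (edgeBlowupProj H p))
        _ ≤ #L := card_image_le
        _ ≤ #(univ.map .inl : Finset (α ⊕ β)) :=
          card_le_card_of_injOn f (fun y hy => by
            obtain ⟨a, ha⟩ := Sum.isLeft_iff.1 (mem_filter.1 hy).2
            simp [ha]) hf_inj.injOn
        _ = Fintype.card α := by rw [card_map, card_univ]

end SimpleGraph

theorem stmt4_general (k l p t : ℕ) (hk : 3 ≤ k) (hko : Odd k) (hle : Even l)
    (hp : 2 ≤ p) (ht : t = (k + l - 3) / 2) :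
    (∃ N : ℕ, ∀ n ≥ N,
      ¬ IsCont (edgeBlowup (lollipop k l) p) (Hgraph n p (t + 2))) ∧
    (∀ S : Finset (Fin (k + l)),
      (∀ a b : Fin (k + l), (lollipop k l).Adj a b → a ∈ S ∨ b ∈ S) →
        t + 1 < S.card) := by
  have hcover : ∀ S : Finset (Fin (k + l)), (lollipop k l).IsVertexCover S → t + 1 < S.card := by
    intro S hS
    have := lollipop_add_le_two_mul_card_of_isVertexCover (by omega) hle hS
    obtain ⟨m, rfl⟩ := hko
    omega
  refine ⟨⟨0, fun n _ hcont => ?_⟩, fun S hS => hcover S fun a b hab => hS a b hab⟩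
  obtain ⟨C, hC, hcard⟩ := exists_isVertexCover_card_le_of_isCont_edgeBlowup_gJoin
    (by omega) (turanGraph_cliqueFree (by omega)) hcont
  have := hcover C hC
  simp only [Fintype.card_fin] at hcard
  omega

/-- For `k ≥ 3` odd, `ℓ ≥ 2` even, `p ≥ 2`, `t = (k+ℓ-3)/2` and `n`
sufficiently large, `H(n,p,t+2) = K_{t+1} ∨ T_p(n-t-1)` contains no copy of
`C_{k,ℓ}^{p+1}`, and indeed the minimum vertex cover of `C_{k,ℓ}` has size
`(k+ℓ+1)/2 > t+1`. -/
theorem stmt4 (k l p t : ℕ) (hk : 3 ≤ k) (hko : Odd k) (hl : 2 ≤ l) (hle : Even l)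
    (hp : 2 ≤ p) (ht : t = (k + l - 3) / 2) :
    (∃ N : ℕ, ∀ n ≥ N,
      ¬ IsCont (edgeBlowup (lollipop k l) p) (Hgraph n p (t + 2))) ∧
    (∀ S : Finset (Fin (k + l)),
      (∀ a b : Fin (k + l), (lollipop k l).Adj a b → a ∈ S ∨ b ∈ S) →
        t + 1 < S.card) :=
  stmt4_general k l p t hk hko hle hp ht
end

section
/- For odd k ≥ 3 and ℓ ≥ 1, the lollipop C_{k,ℓ} is a subgraph of the join of (k+ℓ) disjoint edges with an independent set of size k+ℓ; that is, C_{k,ℓ} ⊆ ((k+ℓ)·P_2) ∨ I_{k+ℓ}. -/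
open SimpleGraph

/-!
Vertex `i` of the lollipop goes to the independent side when `i` is odd and to the end `0` of
the `⌊i/2⌋`-th edge when `i` is even, except `k - 1`, which goes to the end `1` of the edge of
`0`. Odd vertices are pairwise non-adjacent, and for odd `k` the only edge between even
vertices is the closing edge `0 — (k-1)` of the cycle, which is thus mapped onto an edge.
-/

theorem isCont_gJoin_bot {α β γ : Type*} {A : SimpleGraph α} {B : SimpleGraph β} {S : Set α}
    (hS : A.IsIndepSet S) (f : α → β) (g : α → γ) (hf : Sᶜ.InjOn f) (hg : S.InjOn g)
    (hB : ∀ ⦃a b⦄, a ∉ S → b ∉ S → A.Adj a b → B.Adj (f a) (f b)) :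
    IsCont A (gJoin B (⊥ : SimpleGraph γ)) := by
  classical
  refine ⟨fun a => if a ∈ S then .inr (g a) else .inl (f a), ?_, ?_⟩
  · intro a b hab
    by_cases ha : a ∈ S <;> by_cases hb : b ∈ S <;>
      simp only [ha, hb, if_true, if_false, reduceCtorEq, Sum.inl.injEq, Sum.inr.injEq] at hab
    exacts [hg ha hb hab, hf ha hb hab]
  · intro a b hab
    by_cases ha : a ∈ S <;> by_cases hb : b ∈ S <;> simp only [ha, hb, if_true, if_false]
    · exact hS ha hb hab.ne hab
    · trivial
    · trivial
    · exact hB ha hb hab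

theorem lollipop_isIndepSet_odd (k l : ℕ) :
    (lollipop k l).IsIndepSet {v | v.val % 2 = 1} := by
  intro a ha b hb _ hab
  simp only [Set.mem_ofPred_eq] at ha hb
  rw [lollipop, fromRel_adj] at hab
  omega

theorem lollipop_adj_of_even {k l : ℕ} (hk : Odd k) {a b : Fin (k + l)}
    (hab : (lollipop k l).Adj a b) (ha : a.val % 2 = 0) (hb : b.val % 2 = 0) :
    a.val = 0 ∧ b.val = k - 1 ∨ a.val = k - 1 ∧ b.val = 0 := by
  obtain ⟨m, rfl⟩ := hk
  rw [lollipop, fromRel_adj] at hab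
  omega

def finHalf {n : ℕ} (v : Fin n) : Fin n := ⟨v.val / 2, by omega⟩

theorem finHalf_injOn_odd (n : ℕ) : {v : Fin n | v.val % 2 = 1}.InjOn finHalf := by
  intro a ha b hb hab
  simp only [Set.mem_ofPred_eq, finHalf, Fin.mk.injEq] at ha hb hab
  omega

def evenToEdges (k : ℕ) {n : ℕ} (v : Fin n) : Fin n × Fin 2 :=
  if v.val = k - 1 then (⟨0, v.pos⟩, 1) else (finHalf v, 0)

theorem evenToEdges_injOn (k n : ℕ) : {v : Fin n | v.val % 2 = 1}ᶜ.InjOn (evenToEdges k) := by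
  intro a ha b hb hab
  simp only [Set.mem_compl_iff, Set.mem_ofPred_eq] at ha hb
  unfold evenToEdges finHalf at hab
  split_ifs at hab <;> simp only [Prod.mk.injEq, Fin.ext_iff] at hab <;> exact Fin.ext (by omega)

theorem copies_adj_evenToEdges {k n : ℕ} {a b : Fin n} (hab : a ≠ b)
    (h : a.val = 0 ∧ b.val = k - 1 ∨ a.val = k - 1 ∧ b.val = 0) :
    (copies n (pathGraph 2)).Adj (evenToEdges k a) (evenToEdges k b) := by
  have hab' : a.val ≠ b.val := Fin.val_ne_of_ne hab
  have hk : 0 ≠ k - 1 := by omega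
  rcases h with ⟨ha, hb⟩ | ⟨ha, hb⟩ <;>
    simp [copies, evenToEdges, finHalf, pathGraph_two_eq_top, ha, hb, hk, Fin.ext_iff]

theorem stmt7_general (k l : ℕ) (hko : Odd k) :
    IsCont (lollipop k l)
      (gJoin (copies (k + l) (pathGraph 2)) (⊥ : SimpleGraph (Fin (k + l)))) := by
  refine isCont_gJoin_bot (lollipop_isIndepSet_odd k l) (evenToEdges k) finHalf
    (evenToEdges_injOn k _) (finHalf_injOn_odd _) fun a b ha hb hab => ?_
  simp only [Set.mem_ofPred_eq] at ha hb
  exact copies_adj_evenToEdges hab.ne (lollipop_adj_of_even hko hab (by omega) (by omega))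

/-- For odd `k ≥ 3` and `ℓ ≥ 1`, the lollipop `C_{k,ℓ}` is a subgraph
of the join of `k+ℓ` disjoint edges with an independent set of size `k+ℓ`. -/
theorem stmt7 (k l : ℕ) (hk : 3 ≤ k) (hko : Odd k) (hl : 1 ≤ l) :
    IsCont (lollipop k l)
      (gJoin (copies (k + l) (pathGraph 2)) (⊥ : SimpleGraph (Fin (k + l)))) :=
  stmt7_general k l hko
end

section
/- Splitting the center vertex (the unique vertex of degree 3) of the lollipop C_{k,ℓ} yields the disjoint union P_{k+1} ∪ P_{ℓ+1}; consequently, for every p ≥ 2 and m = |V(C_{k,ℓ}^{p+1})|, the edge blow-up C_{k,ℓ}^{p+1} is a subgraph of (P_{k+1} ∪ P_{ℓ+1}) ∨ K_{p-1}(m, m, …, m). -/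
open SimpleGraph

/-!
Let `U` be an independent set of `H` and `F` a graph containing the graph obtained from `H` by
splitting the vertices of `U`. Embed `H^{p+1}` into `F ∨ K_{p-1}(m,…,m)` as follows. A vertex
of `H` outside `U` goes to `F`, and so does the `0`-th clique vertex of an edge `uw` with
`u ∈ U`, which plays the copy of `u` attached to `w`. Every other vertex goes to the
multipartite side: the vertices of `U` to part `0`, the `i`-th clique vertex of an edge to
part `i`. Edges inside `F` come from the split graph, edges across are join edges, and an edge
inside the multipartite side joins two parts: two vertices of `U` are never adjacent, and a
vertex of `U` is adjacent only to clique vertices of index `i ≠ 0`.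

For the lollipop, splitting the center opens the cycle into the path `P_{k+1}` with ends the
copies of the center at `1` and `k - 1`, and its copy at `k` starts the path `P_{ℓ+1}`.
-/

section Splitting

variable {V W : Type*} {H : SimpleGraph V} {U : Set V} {p : ℕ}

abbrev SplitVertex (H : SimpleGraph V) (U : Set V) : Type _ :=
  {v : V // v ∉ U} ⊕ {q : V × V // q.1 ∈ U ∧ H.Adj q.1 q.2}

open scoped Classical in
noncomputable def splitImage (H : SimpleGraph V) (U : Set V) (p : ℕ) :
    V ⊕ (H.edgeSet × Fin (p - 1)) → Option (SplitVertex H U)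
  | .inl v => if hv : v ∈ U then none else some (.inl ⟨v, hv⟩)
  | .inr (e, i) =>
    if h : i.val = 0 ∧ ∃ q : {q : V × V // q.1 ∈ U ∧ H.Adj q.1 q.2}, s(q.1.1, q.1.2) = e.1
    then some (.inr h.2.choose) else none

lemma splitImage_inl_eq_none_iff {v : V} : splitImage H U p (.inl v) = none ↔ v ∈ U := by
  by_cases hv : v ∈ U <;> simp [splitImage, hv]

lemma splitImage_inl_eq_some_iff {v : V} {z : SplitVertex H U} :
    splitImage H U p (.inl v) = some z ↔ ∃ hv : v ∉ U, z = .inl ⟨v, hv⟩ := by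
  by_cases hv : v ∈ U <;> simp [splitImage, hv, eq_comm]

lemma eq_inr_of_splitImage_inr_eq_some {e : H.edgeSet} {i : Fin (p - 1)} {z : SplitVertex H U}
    (h : splitImage H U p (.inr (e, i)) = some z) :
    i.val = 0 ∧ ∃ q, z = .inr q ∧ s(q.1.1, q.1.2) = e.1 := by
  simp only [splitImage] at h
  split_ifs at h with hq
  obtain rfl := Option.some_injective _ h
  exact ⟨hq.1, _, rfl, hq.2.choose_spec⟩

lemma splitImage_inr_ne_none {e : H.edgeSet} {i : Fin (p - 1)} {u : V} (hu : u ∈ U)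
    (hue : u ∈ e.1) (hi : i.val = 0) : splitImage H U p (.inr (e, i)) ≠ none := by
  obtain ⟨w, hw⟩ := Sym2.mem_iff_exists.mp hue
  have hadj : H.Adj u w := by rw [← H.mem_edgeSet, ← hw]; exact e.2
  simp only [splitImage]
  rw [dif_pos ⟨hi, ⟨(u, w), hu, hadj⟩, hw.symm⟩]
  exact Option.some_ne_none _

lemma splitImage_inj {x y : V ⊕ (H.edgeSet × Fin (p - 1))} {z : SplitVertex H U}
    (hx : splitImage H U p x = some z) (hy : splitImage H U p y = some z) : x = y := by
  rcases x with a | ⟨e, i⟩ <;> rcases y with b | ⟨f, j⟩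
  · obtain ⟨_, hza⟩ := splitImage_inl_eq_some_iff.mp hx
    obtain ⟨_, hzb⟩ := splitImage_inl_eq_some_iff.mp hy
    simpa [hza] using hzb
  · obtain ⟨_, hza⟩ := splitImage_inl_eq_some_iff.mp hx
    obtain ⟨-, q, hzq, -⟩ := eq_inr_of_splitImage_inr_eq_some hy
    exact absurd (hza.symm.trans hzq) Sum.inl_ne_inr
  · obtain ⟨_, hzb⟩ := splitImage_inl_eq_some_iff.mp hy
    obtain ⟨-, q, hzq, -⟩ := eq_inr_of_splitImage_inr_eq_some hx
    exact absurd (hzb.symm.trans hzq) Sum.inl_ne_inr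
  · obtain ⟨hi, q, rfl, hqe⟩ := eq_inr_of_splitImage_inr_eq_some hx
    obtain ⟨hj, q', hqq', hqf⟩ := eq_inr_of_splitImage_inr_eq_some hy
    obtain rfl := Sum.inr_injective hqq'
    rw [Subtype.ext (hqe.symm.trans hqf), Fin.ext (hi.trans hj.symm)]

lemma splitGraph_adj_of_splitImage_inl_inr {a : V} {e : H.edgeSet} {i : Fin (p - 1)}
    {z w : SplitVertex H U} (hae : a ∈ e.1)
    (hz : splitImage H U p (.inl a) = some z) (hw : splitImage H U p (.inr (e, i)) = some w) :
    (splitGraph H U).Adj z w := by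
  obtain ⟨ha, rfl⟩ := splitImage_inl_eq_some_iff.mp hz
  obtain ⟨-, q, rfl, hqe⟩ := eq_inr_of_splitImage_inr_eq_some hw
  rw [← hqe, Sym2.mem_iff] at hae
  exact (hae.resolve_left (ne_of_mem_of_not_mem q.2.1 ha).symm).symm

lemma splitGraph_adj_of_splitImage {x y : V ⊕ (H.edgeSet × Fin (p - 1))}
    {z w : SplitVertex H U} (hxy : (edgeBlowup H p).Adj x y)
    (hz : splitImage H U p x = some z) (hw : splitImage H U p y = some w) :
    (splitGraph H U).Adj z w := by
  rcases x with a | ⟨e, i⟩ <;> rcases y with b | ⟨f, j⟩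
  · obtain ⟨_, rfl⟩ := splitImage_inl_eq_some_iff.mp hz
    obtain ⟨_, rfl⟩ := splitImage_inl_eq_some_iff.mp hw
    exact hxy
  · exact splitGraph_adj_of_splitImage_inl_inr hxy hz hw
  · exact (splitGraph_adj_of_splitImage_inl_inr hxy hw hz).symm
  · exact absurd (Fin.ext ((eq_inr_of_splitImage_inr_eq_some hz).1.trans
      (eq_inr_of_splitImage_inr_eq_some hw).1.symm)) hxy.2

def blowupPart (H : SimpleGraph V) (hp : 0 < p - 1) :
    V ⊕ (H.edgeSet × Fin (p - 1)) → Fin (p - 1) :=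
  Sum.elim (fun _ => ⟨0, hp⟩) Prod.snd

lemma blowupPart_ne_of_splitImage_inl_inr (hp : 0 < p - 1) {a : V} {e : H.edgeSet}
    {i : Fin (p - 1)} (hae : a ∈ e.1) (ha : splitImage H U p (.inl a) = none)
    (he : splitImage H U p (.inr (e, i)) = none) :
    blowupPart H hp (.inl a) ≠ blowupPart H hp (.inr (e, i)) := fun hi =>
  splitImage_inr_ne_none (splitImage_inl_eq_none_iff.mp ha) hae (congrArg Fin.val hi).symm he

lemma blowupPart_ne_of_splitImage (hp : 0 < p - 1) (hU : H.IsIndepSet U)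
    {x y : V ⊕ (H.edgeSet × Fin (p - 1))} (hxy : (edgeBlowup H p).Adj x y)
    (hx : splitImage H U p x = none) (hy : splitImage H U p y = none) :
    blowupPart H hp x ≠ blowupPart H hp y := by
  rcases x with a | ⟨e, i⟩ <;> rcases y with b | ⟨f, j⟩
  · exact absurd hxy (hU (splitImage_inl_eq_none_iff.mp hx) (splitImage_inl_eq_none_iff.mp hy)
      (H.ne_of_adj hxy))
  · exact blowupPart_ne_of_splitImage_inl_inr hp hxy hx hy
  · exact (blowupPart_ne_of_splitImage_inl_inr hp hxy hy hx).symm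
  · exact hxy.2

theorem isCont_edgeBlowup_gJoin_of_isCont_splitGraph [Finite V] {F : SimpleGraph W}
    (hp : 2 ≤ p) (hU : H.IsIndepSet U) {m : ℕ}
    (hm : Nat.card (V ⊕ (H.edgeSet × Fin (p - 1))) ≤ m) (hF : IsCont (splitGraph H U) F) :
    IsCont (edgeBlowup H p) (gJoin F (completeMultipartite (p - 1) m)) := by
  obtain ⟨g, hg, hgF⟩ := hF
  have hp' : 0 < p - 1 := by omega
  let φ := (Finite.equivFin (V ⊕ (H.edgeSet × Fin (p - 1)))).toEmbedding.trans
    (Fin.castLEEmb hm)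
  refine ⟨fun x => (splitImage H U p x).elim (.inr (blowupPart H hp' x, φ x)) (.inl ∘ g),
    ?_, ?_⟩
  · intro x y hxy
    cases hx : splitImage H U p x <;> cases hy : splitImage H U p y <;>
      simp only [hx, hy, Option.elim, Function.comp_apply, reduceCtorEq, Sum.inl.injEq,
        Sum.inr.injEq, Prod.mk.injEq] at hxy
    · exact φ.injective hxy.2
    · exact splitImage_inj hx (hy.trans (congrArg some (hg hxy).symm))
  · intro x y hxy
    cases hx : splitImage H U p x <;> cases hy : splitImage H U p y <;>
      simp only [hx, hy, Option.elim, Function.comp_apply]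
    · exact blowupPart_ne_of_splitImage hp' hU hxy hx hy
    · trivial
    · trivial
    · exact hgF (splitGraph_adj_of_splitImage hxy hx hy)

end Splitting

section Lollipop

variable {k l : ℕ}

lemma val_ne_zero_of_notMem_singleton {a c : Fin (k + l)} (hc : c.val = 0)
    (ha : a ∉ ({c} : Set (Fin (k + l)))) : a.val ≠ 0 :=
  fun h0 => ha (Fin.ext (h0.trans hc.symm))

lemma lollipop_adj_iff {a b : Fin (k + l)} :
    (lollipop k l).Adj a b ↔ a.val ≠ b.val ∧
      ((b.val = a.val + 1 ∧ b.val < k) ∨ (a.val = 0 ∧ b.val = k - 1) ∨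
        (a.val = 0 ∧ b.val = k) ∨ (b.val = a.val + 1 ∧ k ≤ a.val) ∨
      (a.val = b.val + 1 ∧ a.val < k) ∨ (b.val = 0 ∧ a.val = k - 1) ∨
        (b.val = 0 ∧ a.val = k) ∨ (a.val = b.val + 1 ∧ k ≤ b.val)) := by
  simp only [lollipop, fromRel_adj, ne_eq, Fin.ext_iff]
  tauto

lemma val_of_lollipop_adj_zero {c w : Fin (k + l)} (hc : c.val = 0)
    (h : (lollipop k l).Adj c w) : w.val = 1 ∨ w.val = k - 1 ∨ w.val = k := by
  have := lollipop_adj_iff.mp h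
  omega

def lollipopToPaths (k l : ℕ) (a : Fin (k + l)) : Fin (k + 1) ⊕ Fin (l + 1) :=
  if h : a.val < k then .inl ⟨a.val, by omega⟩
  else .inr ⟨a.val - k + 1, by have := a.isLt; omega⟩

def centerCopyToPaths (k l : ℕ) (w : Fin (k + l)) : Fin (k + 1) ⊕ Fin (l + 1) :=
  if w.val = k then .inr 0 else if w.val = 1 then .inl 0 else .inl (Fin.last k)

lemma lollipopToPaths_injective : Function.Injective (lollipopToPaths k l) := by
  intro a b h
  simp only [lollipopToPaths] at h
  split_ifs at h <;> simp only [Sum.inl.injEq, Sum.inr.injEq, Fin.ext_iff] at h <;> omega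

lemma lollipopToPaths_ne_centerCopyToPaths {a : Fin (k + l)} (ha : a.val ≠ 0) (w : Fin (k + l)) :
    lollipopToPaths k l a ≠ centerCopyToPaths k l w := by
  simp only [lollipopToPaths, centerCopyToPaths]
  split_ifs <;> simp only [ne_eq, Sum.inl.injEq, Sum.inr.injEq, reduceCtorEq, Fin.ext_iff,
    Fin.val_zero, Fin.val_last, not_false_eq_true] <;> omega

lemma centerCopyToPaths_inj {c w w' : Fin (k + l)} (hc : c.val = 0)
    (hw : (lollipop k l).Adj c w) (hw' : (lollipop k l).Adj c w')
    (h : centerCopyToPaths k l w = centerCopyToPaths k l w') : w = w' := by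
  have hw₀ := val_of_lollipop_adj_zero hc hw
  have hw₀' := val_of_lollipop_adj_zero hc hw'
  simp only [centerCopyToPaths] at h
  split_ifs at h <;> simp only [Sum.inl.injEq, Fin.ext_iff, Fin.val_zero, Fin.val_last] at h ⊢ <;>
    omega

lemma lollipopToPaths_adj {a b : Fin (k + l)} (ha : a.val ≠ 0) (hb : b.val ≠ 0)
    (h : (lollipop k l).Adj a b) :
    (dUnion (pathGraph (k + 1)) (pathGraph (l + 1))).Adj
      (lollipopToPaths k l a) (lollipopToPaths k l b) := by
  have := lollipop_adj_iff.mp h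
  simp only [lollipopToPaths]
  split_ifs <;> simp only [dUnion, pathGraph_adj] <;> omega

lemma lollipopToPaths_adj_centerCopyToPaths (hk : 1 ≤ k) {c w : Fin (k + l)} (hc : c.val = 0)
    (hw : (lollipop k l).Adj c w) :
    (dUnion (pathGraph (k + 1)) (pathGraph (l + 1))).Adj
      (lollipopToPaths k l w) (centerCopyToPaths k l w) := by
  have := val_of_lollipop_adj_zero hc hw
  simp only [lollipopToPaths, centerCopyToPaths]
  split_ifs <;> simp only [dUnion, pathGraph_adj, Fin.val_zero, Fin.val_last] <;> omega

variable {c : Fin (k + l)}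

def lollipopSplitToPaths (k l : ℕ) (c : Fin (k + l)) :
    SplitVertex (lollipop k l) {c} → Fin (k + 1) ⊕ Fin (l + 1) :=
  Sum.elim (fun a => lollipopToPaths k l a.1) (fun q => centerCopyToPaths k l q.1.2)

lemma lollipopSplitToPaths_injective (hc : c.val = 0) :
    Function.Injective (lollipopSplitToPaths k l c) := by
  rintro (⟨a, ha⟩ | ⟨⟨u, w⟩, hu, hw⟩) (⟨b, hb⟩ | ⟨⟨u', w'⟩, hu', hw'⟩) h
  · obtain rfl := lollipopToPaths_injective h
    rfl
  · exact absurd h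
      (lollipopToPaths_ne_centerCopyToPaths (val_ne_zero_of_notMem_singleton hc ha) w')
  · exact absurd h.symm
      (lollipopToPaths_ne_centerCopyToPaths (val_ne_zero_of_notMem_singleton hc hb) w)
  · obtain rfl : u = c := hu
    obtain rfl : u' = u := hu'
    obtain rfl := centerCopyToPaths_inj hc hw hw' h
    rfl

lemma lollipopSplitToPaths_adj (hk : 1 ≤ k) (hc : c.val = 0)
    {x y : SplitVertex (lollipop k l) {c}} (h : (splitGraph (lollipop k l) {c}).Adj x y) :
    (dUnion (pathGraph (k + 1)) (pathGraph (l + 1))).Adj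
      (lollipopSplitToPaths k l c x) (lollipopSplitToPaths k l c y) := by
  rcases x with ⟨a, ha⟩ | ⟨⟨u, w⟩, hu, hw⟩ <;>
    rcases y with ⟨b, hb⟩ | ⟨⟨u', w'⟩, hu', hw'⟩
  · exact lollipopToPaths_adj (val_ne_zero_of_notMem_singleton hc ha)
      (val_ne_zero_of_notMem_singleton hc hb) h
  · obtain rfl : u' = c := hu'
    obtain rfl : w' = a := h
    exact lollipopToPaths_adj_centerCopyToPaths hk hc hw'
  · obtain rfl : u = c := hu
    obtain rfl : w = b := h
    exact (lollipopToPaths_adj_centerCopyToPaths hk hc hw).symm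
  · exact h.elim

theorem isCont_splitGraph_lollipop (hk : 1 ≤ k) (hc : c.val = 0) :
    IsCont (splitGraph (lollipop k l) {c}) (dUnion (pathGraph (k + 1)) (pathGraph (l + 1))) :=
  ⟨lollipopSplitToPaths k l c, lollipopSplitToPaths_injective hc,
    fun _ _ => lollipopSplitToPaths_adj hk hc⟩

end Lollipop

theorem stmt8_general (k l p m : ℕ) (hk : 3 ≤ k) (hp : 2 ≤ p)
    (hm : m = Nat.card (Fin (k + l) ⊕ ((lollipop k l).edgeSet × Fin (p - 1)))) :
    IsCont (edgeBlowup (lollipop k l) p)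
      (gJoin (dUnion (pathGraph (k + 1)) (pathGraph (l + 1)))
        (completeMultipartite (p - 1) m)) :=
  isCont_edgeBlowup_gJoin_of_isCont_splitGraph hp (Set.pairwise_singleton _ _) hm.ge
    (isCont_splitGraph_lollipop (c := ⟨0, by omega⟩) (by omega) rfl)

/-- Splitting the center of the lollipop `C_{k,ℓ}` yields
`P_{k+1} ∪ P_{ℓ+1}`; consequently, for every `p ≥ 2` and
`m = |V(C_{k,ℓ}^{p+1})|`, the edge blow-up `C_{k,ℓ}^{p+1}` is a subgraph of
`(P_{k+1} ∪ P_{ℓ+1}) ∨ K_{p-1}(m,…,m)`. -/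
theorem stmt8 (k l p m : ℕ) (hk : 3 ≤ k) (hl : 1 ≤ l) (hp : 2 ≤ p)
    (hm : m = Nat.card (Fin (k + l) ⊕ ((lollipop k l).edgeSet × Fin (p - 1)))) :
    IsCont (edgeBlowup (lollipop k l) p)
      (gJoin (dUnion (pathGraph (k + 1)) (pathGraph (l + 1)))
        (completeMultipartite (p - 1) m)) :=
  stmt8_general k l p m hk hp hm
end
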